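/- Let h̄ ∈ Λ̂₀ be a local functional with ∂h̄/∂u = 0. Then there exist a constant α ∈ ℂ and a differential polynomial h ∈ 𝒜̂₀ with ∂h/∂u₀ = 0 such that h̄ = α·∫u₀ dx + ∫h dx. -/

import Mathlib

open scoped Classical
open PowerSeries

noncomputable section

namespace RiemannPaper

/-- ℂ[[u₀]] -/
abbrev RR : Type := PowerSeries ℂ
/-- 𝒜 = ℂ[[u₀]][u₁,u₂,…] -/
abbrev AA : Type := MvPolynomial ℕ+ RR
/-- 𝒜̂ = 𝒜[[ε]] -/
abbrev AH : Type := PowerSeries AA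

/-- the variable uₙ as an element of 𝒜 (u₀ is the power-series variable of the coefficients) -/
def uv (n : ℕ) : AA :=
  if h : 0 < n then MvPolynomial.X (⟨n, h⟩ : ℕ+) else MvPolynomial.C PowerSeries.X

/-- ∂/∂u₀ on 𝒜 -/
def pd0 (f : AA) : AA :=
  ∑ m ∈ f.support, MvPolynomial.monomial m (PowerSeries.derivativeFun (MvPolynomial.coeff m f))

/-- ∂/∂uₙ on 𝒜 -/
def pdA : ℕ → AA → AA
  | 0 => pd0
  | (n+1) => fun f => MvPolynomial.pderiv (⟨n+1, n.succ_pos⟩ : ℕ+) f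

/-- ∂ₓ on 𝒜 -/
def dxA (f : AA) : AA := ∑ᶠ n : ℕ, uv (n+1) * pdA n f

/-- coefficientwise (ℂ[[ε]]-linear) extension of an operator on 𝒜 to 𝒜̂ -/
def lift1 (F : AA → AA) (h : AH) : AH := PowerSeries.mk fun k => F (PowerSeries.coeff (R := AA) k h)

/-- ∂ₓ on 𝒜̂ -/
def dxH : AH → AH := lift1 dxA
/-- ∂/∂uₙ on 𝒜̂ -/
def pdH (n : ℕ) : AH → AH := lift1 (pdA n)
def negDxA (f : AA) : AA := -dxA f
def negDxH (h : AH) : AH := -dxH h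

/-- evolutionary operator D_P = ∑ₙ (∂ₓⁿP)·∂/∂uₙ on 𝒜 -/
def DopA (P f : AA) : AA := ∑ᶠ n : ℕ, (dxA^[n] P) * pdA n f
/-- evolutionary operator D_P on 𝒜̂ -/
def DopH (P f : AH) : AH :=
  PowerSeries.mk fun k => ∑ᶠ n : ℕ, PowerSeries.coeff (R := AA) k ((dxH^[n] P) * pdH n f)

/-- variational derivative δ/δu = ∑ₙ(−∂ₓ)ⁿ∘∂/∂uₙ on 𝒜 -/
def varDA (f : AA) : AA := ∑ᶠ n : ℕ, negDxA^[n] (pdA n f)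
/-- variational derivative on 𝒜̂ -/
def varD (f : AH) : AH :=
  PowerSeries.mk fun k => ∑ᶠ n : ℕ, PowerSeries.coeff (R := AA) k (negDxH^[n] (pdH n f))

/-- weighted degree of a monomial, deg uₙ = n -/
def wdeg (m : ℕ+ →₀ ℕ) : ℕ := m.sum fun i e => (i : ℕ) * e
/-- f is homogeneous of differential degree d -/
def homogA (f : AA) (d : ℤ) : Prop := ∀ m ∈ f.support, (wdeg m : ℤ) = d
/-- f ∈ 𝒜̂_d (deg ε = −1) -/
def memAH (d : ℤ) (f : AH) : Prop := ∀ k : ℕ, homogA (PowerSeries.coeff (R := AA) k f) (d + k)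

/-- Im ∂ₓ ⊕ ℂ ⊂ 𝒜, so that Λ = 𝒜/NA -/
def NA : Submodule ℂ AA := Submodule.span ℂ (Set.range dxA ∪ Set.range (algebraMap ℂ AA))
/-- Im ∂ₓ ⊕ ℂ[[ε]] ⊂ 𝒜̂, so that Λ̂ = 𝒜̂/NH -/
def NH : Submodule ℂ AH :=
  Submodule.span ℂ (Set.range dxH ∪ Set.range (⇑(PowerSeries.map (algebraMap ℂ AA))))

/-- ε ∈ 𝒜̂ -/
def epsH : AH := PowerSeries.X
/-- uₙ as an element of 𝒜̂ -/
def uH (n : ℕ) : AH := PowerSeries.C (R := AA) (uv n)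

/-- a differential operator K = ∑ᵢ Kᵢ∂ₓ^i (finite sum) applied to f -/
def opApply (K : ℕ →₀ AH) (f : AH) : AH := K.sum fun i c => c * dxH^[i] f
/-- L(Q) = ∑ₙ(∂Q/∂uₙ)∂ₓⁿ applied to f -/
def Lapp (Q f : AH) : AH :=
  PowerSeries.mk fun k => ∑ᶠ n : ℕ, PowerSeries.coeff (R := AA) k (pdH n Q * dxH^[n] f)
/-- L(Q)† = ∑ₙ(−∂ₓ)ⁿ∘(∂Q/∂uₙ) applied to f -/
def LadjApp (Q f : AH) : AH :=
  PowerSeries.mk fun k => ∑ᶠ n : ℕ, PowerSeries.coeff (R := AA) k (negDxH^[n] (pdH n Q * f))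

/-- canonical representative of the bracket {f̄,h̄}_K = ∫ δf̄/δu · K(δh̄/δu) dx -/
def brRep (K : ℕ →₀ AH) (f h : AH) : AH := varD f * opApply K (varD h)
/-- K is a Poisson operator: the bracket is skew-symmetric and satisfies Jacobi (in Λ̂) -/
def IsPoisson (K : ℕ →₀ AH) : Prop :=
  (∀ f h : AH, brRep K f h + brRep K h f ∈ NH) ∧
  (∀ f g h : AH,
    brRep K (brRep K f g) h + brRep K (brRep K g h) f + brRep K (brRep K h f) g ∈ NH)

/-- K has degree 1 -/
def opDeg1 (K : ℕ →₀ AH) : Prop := ∀ i : ℕ, memAH (1 - (i : ℤ)) (K i)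
/-- K|_{ε=0} = ∂ₓ -/
def opEps0Dx (K : ℕ →₀ AH) : Prop :=
  ∀ i : ℕ, PowerSeries.coeff (R := AA) 0 (K i) = if i = 1 then 1 else 0

/-- g ∈ ℂ[[u₀]] as an element of 𝒜̂ -/
def cH (g : RR) : AH := PowerSeries.C (R := AA) (MvPolynomial.C g)
/-- truncation of an element of 𝒜̂ keeping the ε-coefficients up to εᵏ -/
def truncAH (k : ℕ) (h : AH) : AH :=
  ∑ i ∈ Finset.range (k+1), (PowerSeries.monomial (R := AA) i) (PowerSeries.coeff (R := AA) i h)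
/-- the Taylor evaluation g(w) for g ∈ ℂ[[u₀]] and w ≡ u₀ mod ε -/
def tayl (g : RR) (w : AH) : AH := PowerSeries.mk fun k =>
  PowerSeries.coeff (R := AA) k (∑ j ∈ Finset.range (k+1),
    ((j.factorial : ℂ))⁻¹ • (cH (PowerSeries.derivativeFun^[j] g) * (w - uH 0) ^ j))

/-- S is the substitution map S_w, the unique continuous ℂ[[ε]]-algebra endomorphism of 𝒜̂
with S(uₙ) = ∂ₓⁿ(w) -/
structure IsSubst (w : AH) (S : AH → AH) : Prop where
  map_add : ∀ a b, S (a + b) = S a + S b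
  map_mul : ∀ a b, S (a * b) = S a * S b
  map_one : S 1 = 1
  map_smul : ∀ (c : ℂ) (a), S (c • a) = c • S a
  map_eps : ∀ a, S (epsH * a) = epsH * S a
  map_u : ∀ n : ℕ, S (uH n) = dxH^[n] w
  map_ps : ∀ g : RR, S (cH g) = tayl g w
  cont : ∀ a (k : ℕ),
    PowerSeries.coeff (R := AA) k (S a) = PowerSeries.coeff (R := AA) k (S (truncAH k a))

/-- w is a Miura transformation: w = u₀ + εf, f ∈ 𝒜̂₁ -/
def isMiura (w : AH) : Prop := ∃ f : AH, memAH 1 f ∧ w = uH 0 + epsH * f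
/-- w belongs to Mi_{∂ₓ}: L(w)∘∂ₓ∘L(w)† = ∂ₓ -/
def inMiDx (w : AH) : Prop := ∀ f : AH, Lapp w (dxH (LadjApp w f)) = dxH f
/-- w is a normal Miura transformation: w = u₀ + ∂ₓ²P, P ∈ 𝒜̂₋₂ -/
def isNormalMiura (w : AH) : Prop := ∃ P : AH, memAH (-2) P ∧ w = uH 0 + dxH (dxH P)

/-- u_λ = ∏ᵢ u_{λᵢ} -/
def uP {n : ℕ} (l : n.Partition) : AA := (l.parts.map uv).prod
/-- the parts of λ sorted in decreasing order -/
def sortedParts {n : ℕ} (l : n.Partition) : List ℕ := (l.parts.sort (· ≤ ·)).reverse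
/-- lexicographic order on partitions -/
def lexLt {n : ℕ} (l m : n.Partition) : Prop :=
  List.Lex (· < ·) (sortedParts l) (sortedParts m)
def lexLe {n : ℕ} (l m : n.Partition) : Prop := lexLt l m ∨ l = m
/-- λ ∈ 𝒫ₙ°: at least two parts and λ₁ = λ₂ -/
def Pcirc {n : ℕ} (l : n.Partition) : Prop :=
  2 ≤ Multiset.card l.parts ∧ (sortedParts l).getD 0 0 = (sortedParts l).getD 1 0
/-- λ ∈ 𝒫ₙ′: λ ∈ 𝒫ₙ° and all parts ≥ 2 -/
def Pprime {n : ℕ} (l : n.Partition) : Prop := Pcirc l ∧ ∀ i ∈ l.parts, 2 ≤ i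
/-- (λ,1): adjoin a part equal to 1 -/
def addOne {n : ℕ} (l : n.Partition) : (n+1).Partition where
  parts := 1 ::ₘ l.parts
  parts_pos := by
    intro i hi
    rcases Multiset.mem_cons.mp hi with h | h
    · simp [h]
    · exact l.parts_pos h
  parts_sum := by simp [l.parts_sum, add_comm]


/-!
Write `∂h₀/∂u₀ = ∂ₓg + ψ(ε)` and work with one coefficient `P` of `εᵏ` at a time; it is
homogeneous of degree `k`. Projecting onto degree `k`, the constant survives only for `k = 0`
and `g` may be replaced by its component `Q` of degree `k - 1`, so `∂P/∂u₀ = ∂ₓQ + c`.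
Let `I` integrate every coefficient in `u₀` from `0` and `E` set `u₀ = 0` in every coefficient.
Then `I ∘ ∂/∂u₀ = id - E` and `I ∂ₓ = ∂ₓ I - u₁ E`, hence
`P = c u₀ + (E P - u₁ E Q) + ∂ₓ(I Q)`, and the middle term is free of `u₀` and of degree `k`.
-/

open MvPolynomial

def antideriv : RR →ₗ[ℂ] RR where
  toFun g := PowerSeries.mk fun n => if n = 0 then 0 else (n : ℂ)⁻¹ * PowerSeries.coeff (n - 1) g
  map_add' a b := by
    ext n
    simp only [PowerSeries.coeff_mk, map_add]
    split_ifs <;> ring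
  map_smul' c a := by
    ext n
    simp only [PowerSeries.coeff_mk, PowerSeries.coeff_smul, RingHom.id_apply, smul_eq_mul]
    split_ifs <;> ring

def constTerm : RR →ₗ[ℂ] RR := Algebra.linearMap ℂ RR ∘ₗ PowerSeries.coeff 0

lemma coeff_succ_antideriv (g : RR) (n : ℕ) :
    PowerSeries.coeff (n + 1) (antideriv g) = ((n : ℂ) + 1)⁻¹ * PowerSeries.coeff n g := by
  simp [antideriv]

lemma constantCoeff_antideriv (g : RR) : PowerSeries.constantCoeff (antideriv g) = 0 := by
  simp [antideriv, ← PowerSeries.coeff_zero_eq_constantCoeff_apply]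

lemma antideriv_derivative (g : RR) :
    antideriv (PowerSeries.derivative ℂ g) = g - constTerm g := by
  ext (_ | n)
  · simp [constTerm, constantCoeff_antideriv]
  · rw [coeff_succ_antideriv, PowerSeries.coeff_derivative]
    simp only [constTerm, LinearMap.coe_comp, Function.comp_apply, Algebra.linearMap_apply,
      PowerSeries.algebraMap_eq, map_sub, PowerSeries.coeff_succ_C, sub_zero]
    field_simp

lemma derivative_antideriv (g : RR) : PowerSeries.derivative ℂ (antideriv g) = g := by
  ext n
  rw [PowerSeries.coeff_derivative, coeff_succ_antideriv]
  field_simp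

lemma antideriv_one : antideriv 1 = PowerSeries.X := by
  ext (_ | _ | n) <;> simp [antideriv, PowerSeries.coeff_one, PowerSeries.coeff_X]

lemma derivative_constTerm (g : RR) : PowerSeries.derivative ℂ (constTerm g) = 0 := by
  simp [constTerm]

def coeffMap (φ : RR →ₗ[ℂ] RR) : AA →ₗ[ℂ] AA where
  toFun f := AddMonoidAlgebra.ofCoeff (Finsupp.mapRange φ φ.map_zero (AddMonoidAlgebra.coeff f))
  map_add' f g := MvPolynomial.ext _ _ fun m =>
    (congrArg φ (coeff_add m f g)).trans (map_add φ _ _)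
  map_smul' c f := MvPolynomial.ext _ _ fun m =>
    (congrArg φ (coeff_smul m c f)).trans (map_smul φ _ _)

section coeffMap

variable (φ : RR →ₗ[ℂ] RR)

@[simp]
lemma coeff_coeffMap (f : AA) (m : ℕ+ →₀ ℕ) :
    MvPolynomial.coeff m (coeffMap φ f) = φ (MvPolynomial.coeff m f) :=
  rfl

lemma coeffMap_monomial (m : ℕ+ →₀ ℕ) (r : RR) :
    coeffMap φ (MvPolynomial.monomial m r) = MvPolynomial.monomial m (φ r) := by
  ext m' : 1
  simp only [coeff_coeffMap, MvPolynomial.coeff_monomial]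
  split_ifs <;> simp

lemma coeffMap_X_mul (i : ℕ+) (f : AA) :
    coeffMap φ (MvPolynomial.X i * f) = MvPolynomial.X i * coeffMap φ f := by
  ext m : 1
  simp only [coeff_coeffMap, coeff_X_mul']
  split_ifs <;> simp

lemma coeffMap_pderiv (i : ℕ+) (f : AA) :
    coeffMap φ (pderiv i f) = pderiv i (coeffMap φ f) := by
  induction f using MvPolynomial.induction_on' with
  | monomial m r =>
    rw [coeffMap_monomial, pderiv_monomial, pderiv_monomial, coeffMap_monomial, mul_comm,
      ← nsmul_eq_mul, map_nsmul, nsmul_eq_mul, mul_comm]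
  | add p q hp hq => simp only [map_add, hp, hq]

lemma isWeightedHomogeneous_coeffMap {M : Type*} [AddCommMonoid M] {w : ℕ+ → M} {f : AA} {n : M}
    (hf : IsWeightedHomogeneous w f n) : IsWeightedHomogeneous w (coeffMap φ f) n :=
  fun m hm => hf fun h0 => hm (by simp [h0])

end coeffMap

lemma pd0_eq_coeffMap (f : AA) : pd0 f = coeffMap (PowerSeries.derivative ℂ).toLinearMap f := by
  ext m : 1
  simp only [pd0, coeff_sum, MvPolynomial.coeff_monomial, Finset.sum_ite_eq', mem_support_iff,
    coeff_coeffMap]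
  split_ifs with h
  · rfl
  · simp [not_not.mp h]

lemma uv_succ (n : ℕ) : uv (n + 1) = MvPolynomial.X n.succPNat := by
  simp [uv, Nat.succPNat]

lemma pdA_succ (n : ℕ) (f : AA) : pdA (n + 1) f = pderiv n.succPNat f := rfl

lemma pdA_add (n : ℕ) (f g : AA) : pdA n (f + g) = pdA n f + pdA n g := by
  cases n with
  | zero => simp only [pdA, pd0_eq_coeffMap, map_add]
  | succ n => exact map_add _ f g

lemma pdA_smul (n : ℕ) (c : ℂ) (f : AA) : pdA n (c • f) = c • pdA n f := by
  cases n with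
  | zero => simp only [pdA, pd0_eq_coeffMap, map_smul]
  | succ n => exact (pderiv _).toLinearMap.map_smul_of_tower c f

lemma finite_support_dxA_terms (f : AA) :
    (Function.support fun n => uv (n + 1) * pdA n f).Finite := by
  refine ((f.vars.finite_toSet.image PNat.val).insert 0).subset fun n hn => ?_
  cases n with
  | zero => exact Set.mem_insert _ _
  | succ n =>
    refine Or.inr ⟨n.succPNat, ?_, rfl⟩
    by_contra hn'
    exact hn (by simp [pdA_succ, pderiv_eq_zero_of_notMem_vars hn'])

lemma dxA_add (f g : AA) : dxA (f + g) = dxA f + dxA g := by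
  simp only [dxA, pdA_add, mul_add]
  exact finsum_add_distrib (finite_support_dxA_terms f) (finite_support_dxA_terms g)

lemma dxA_smul (c : ℂ) (f : AA) : dxA (c • f) = c • dxA f := by
  simp only [dxA, pdA_smul, mul_smul_comm]
  exact (smul_finsum' c (finite_support_dxA_terms f)).symm

lemma dxA_zero : dxA 0 = 0 := by
  simpa using dxA_smul 0 0

lemma coeffMap_dxA (φ : RR →ₗ[ℂ] RR) (f : AA) :
    coeffMap φ (dxA f) =
      dxA (coeffMap φ f) + uv 1 * (coeffMap φ (pd0 f) - pd0 (coeffMap φ f)) := by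
  set δ := uv 1 * (coeffMap φ (pd0 f) - pd0 (coeffMap φ f))
  have hterm (n : ℕ) : coeffMap φ (uv (n + 1) * pdA n f) =
      uv (n + 1) * pdA n (coeffMap φ f) + if n = 0 then δ else 0 := by
    cases n with
    | zero => simp only [δ, uv_succ, coeffMap_X_mul, pdA, if_pos]; ring
    | succ n => simp [uv_succ, coeffMap_X_mul, pdA_succ, coeffMap_pderiv]
  have hδ : (Function.support fun n : ℕ => if n = 0 then δ else 0).Finite :=
    (Set.finite_singleton 0).subset (Function.support_subset_iff'.2 fun n hn => if_neg hn)
  calc coeffMap φ (dxA f) = ∑ᶠ n, coeffMap φ (uv (n + 1) * pdA n f) :=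
        (coeffMap φ).toAddMonoidHom.map_finsum (finite_support_dxA_terms f)
    _ = dxA (coeffMap φ f) + ∑ᶠ n : ℕ, if n = 0 then δ else 0 := by
        rw [finsum_congr hterm, finsum_add_distrib (finite_support_dxA_terms _) hδ, dxA]
    _ = dxA (coeffMap φ f) + δ := by
        rw [finsum_eq_single _ 0 fun n hn => if_neg hn, if_pos rfl]

/-- Valued in `ℤ` so that `∂/∂uₙ` lowers the degree by `n` without truncated subtraction. -/
def degWeight (i : ℕ+) : ℤ := i

lemma weight_degWeight (m : ℕ+ →₀ ℕ) : Finsupp.weight degWeight m = wdeg m := by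
  simp [Finsupp.weight_apply, wdeg, Finsupp.sum, degWeight, mul_comm]

lemma homogA_iff_isWeightedHomogeneous {f : AA} {d : ℤ} :
    homogA f d ↔ IsWeightedHomogeneous degWeight f d := by
  simp [homogA, IsWeightedHomogeneous, weight_degWeight]

lemma isWeightedHomogeneous_dxA {f : AA} {n : ℤ} (hf : IsWeightedHomogeneous degWeight f n) :
    IsWeightedHomogeneous degWeight (dxA f) (n + 1) := by
  refine finsum_induction (IsWeightedHomogeneous degWeight · (n + 1))
    (isWeightedHomogeneous_zero _ _ _) (fun _ _ => .add) fun j => ?_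
  cases j with
  | zero =>
    rw [uv_succ, add_comm, pdA, pd0_eq_coeffMap]
    exact (isWeightedHomogeneous_X _ _ _).mul (isWeightedHomogeneous_coeffMap _ hf)
  | succ j =>
    rw [uv_succ, pdA_succ]
    convert (isWeightedHomogeneous_X RR degWeight _).mul (hf.pderiv (n' := n - (j + 1)) ?_) using 1
    · simp only [degWeight, Nat.succPNat_coe, Nat.succ_eq_add_one, Nat.cast_add, Nat.cast_one]
      ring
    · simp [degWeight]

lemma weightedHomogeneousComponent_dxA (e : ℤ) (f : AA) :
    weightedHomogeneousComponent degWeight (e + 1) (dxA f) =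
      dxA (weightedHomogeneousComponent degWeight e f) := by
  induction f using MvPolynomial.induction_on' with
  | monomial m r =>
    have hm := isWeightedHomogeneous_monomial degWeight m r rfl
    rw [weightedHomogeneousComponent_of_mem (isWeightedHomogeneous_dxA hm),
      weightedHomogeneousComponent_of_mem hm]
    by_cases h : e = Finsupp.weight degWeight m <;> simp [h, dxA_zero]
  | add p q hp hq => rw [dxA_add, map_add, hp, hq, map_add, dxA_add]

lemma weightedHomogeneousComponent_algebraMap (k : ℤ) (c : ℂ) :
    weightedHomogeneousComponent degWeight k (algebraMap ℂ AA c) =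
      if k = 0 then algebraMap ℂ AA c else 0 :=
  weightedHomogeneousComponent_of_mem (by
    rw [MvPolynomial.algebraMap_apply]; exact isWeightedHomogeneous_C _ _)

lemma coeffMap_antideriv_pd0 (f : AA) :
    coeffMap antideriv (pd0 f) = f - coeffMap constTerm f := by
  ext m : 1; simp [pd0_eq_coeffMap, antideriv_derivative]

lemma pd0_coeffMap_antideriv (f : AA) : pd0 (coeffMap antideriv f) = f := by
  ext m : 1; simp [pd0_eq_coeffMap, derivative_antideriv]

lemma pd0_coeffMap_constTerm (f : AA) : pd0 (coeffMap constTerm f) = 0 := by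
  ext m : 1; simp [pd0_eq_coeffMap, derivative_constTerm]

lemma coeffMap_antideriv_dxA (f : AA) :
    coeffMap antideriv (dxA f) = dxA (coeffMap antideriv f) - uv 1 * coeffMap constTerm f := by
  rw [coeffMap_dxA, coeffMap_antideriv_pd0, pd0_coeffMap_antideriv]; ring

lemma coeffMap_antideriv_algebraMap (c : ℂ) :
    coeffMap antideriv (algebraMap ℂ AA c) = c • uv 0 := by
  rw [MvPolynomial.algebraMap_apply, ← monomial_zero', coeffMap_monomial,
    Algebra.algebraMap_eq_smul_one, map_smul, antideriv_one]
  simp [uv]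

lemma eq_of_pd0_eq_dxA_add_algebraMap {P Q : AA} {c : ℂ} (h : pd0 P = dxA Q + algebraMap ℂ AA c) :
    P = c • uv 0 + (coeffMap constTerm P - uv 1 * coeffMap constTerm Q) +
      dxA (coeffMap antideriv Q) := by
  have hP := coeffMap_antideriv_pd0 P
  rw [h, map_add, coeffMap_antideriv_dxA, coeffMap_antideriv_algebraMap] at hP
  linear_combination -hP

lemma pd0_uv_one_mul (f : AA) : pd0 (uv 1 * f) = uv 1 * pd0 f := by
  rw [pd0_eq_coeffMap, pd0_eq_coeffMap, uv_succ, coeffMap_X_mul]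

lemma exists_decomposition_of_pd0_eq {P G : AA} {c : ℂ} {k : ℕ}
    (hP : IsWeightedHomogeneous degWeight P k) (h : pd0 P = dxA G + algebraMap ℂ AA c) :
    ∃ H Q : AA, IsWeightedHomogeneous degWeight H k ∧ pd0 H = 0 ∧
      P = (if k = 0 then c else 0) • uv 0 + H + dxA Q := by
  set G' := weightedHomogeneousComponent degWeight ((k : ℤ) - 1) G
  have hG' : pd0 P = dxA G' + algebraMap ℂ AA (if k = 0 then c else 0) := by
    have hpd0 : IsWeightedHomogeneous degWeight (pd0 P) k := by
      rw [pd0_eq_coeffMap]; exact isWeightedHomogeneous_coeffMap _ hP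
    rw [← weightedHomogeneousComponent_eq_self hpd0, h, map_add, ← sub_add_cancel (k : ℤ) 1,
      weightedHomogeneousComponent_dxA, sub_add_cancel, weightedHomogeneousComponent_algebraMap]
    by_cases hk : k = 0 <;> simp [hk, G']
  refine ⟨_, _, ?_, ?_, eq_of_pd0_eq_dxA_add_algebraMap hG'⟩
  · have hu : IsWeightedHomogeneous degWeight (uv 1) 1 := by
      rw [uv_succ]; exact isWeightedHomogeneous_X ..
    have huG' := hu.mul (isWeightedHomogeneous_coeffMap constTerm
      (weightedHomogeneousComponent_isWeightedHomogeneous ((k : ℤ) - 1) G))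
    rw [add_sub_cancel] at huG'
    exact (isWeightedHomogeneous_coeffMap _ hP).sub huG'
  · rw [pd0_eq_coeffMap, map_sub, ← pd0_eq_coeffMap, ← pd0_eq_coeffMap, pd0_uv_one_mul,
      pd0_coeffMap_constTerm, pd0_coeffMap_constTerm, mul_zero, sub_zero]

lemma coeff_lift1 (F : AA → AA) (h : AH) (k : ℕ) :
    PowerSeries.coeff k (lift1 F h) = F (PowerSeries.coeff k h) :=
  PowerSeries.coeff_mk _ _

lemma coeff_dxH (h : AH) (k : ℕ) : PowerSeries.coeff k (dxH h) = dxA (PowerSeries.coeff k h) :=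
  coeff_lift1 _ _ _

lemma coeff_pdH (n : ℕ) (h : AH) (k : ℕ) :
    PowerSeries.coeff k (pdH n h) = pdA n (PowerSeries.coeff k h) :=
  coeff_lift1 _ _ _

lemma dxH_add (g h : AH) : dxH (g + h) = dxH g + dxH h := by
  ext k : 1; simp [coeff_dxH, dxA_add]

lemma dxH_smul (c : ℂ) (h : AH) : dxH (c • h) = c • dxH h := by
  ext k : 1; simp [coeff_dxH, dxA_smul]

lemma dxH_zero : dxH 0 = 0 := by
  ext k : 1; simp [coeff_dxH, dxA_zero]

lemma dxH_mem_NH (h : AH) : dxH h ∈ NH :=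
  Submodule.subset_span (Or.inl ⟨h, rfl⟩)

lemma exists_eq_dxH_add_map_of_mem_NH {x : AH} (hx : x ∈ NH) :
    ∃ (g : AH) (ψ : PowerSeries ℂ), x = dxH g + PowerSeries.map (algebraMap ℂ AA) ψ := by
  induction hx using Submodule.span_induction with
  | mem x hx =>
    rcases hx with ⟨g, rfl⟩ | ⟨ψ, rfl⟩
    · exact ⟨g, 0, by simp⟩
    · exact ⟨0, ψ, by simp [dxH_zero]⟩
  | zero => exact ⟨0, 0, by simp [dxH_zero]⟩
  | add x y _ _ hx hy =>
    obtain ⟨g, ψ, rfl⟩ := hx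
    obtain ⟨g', ψ', rfl⟩ := hy
    exact ⟨g + g', ψ + ψ', by rw [dxH_add, map_add]; abel⟩
  | smul c x _ hx =>
    obtain ⟨g, ψ, rfl⟩ := hx
    refine ⟨c • g, c • ψ, ?_⟩
    rw [smul_add, dxH_smul]
    exact congrArg _ (map_smul (PowerSeries.mapAlgHom (Algebra.ofId ℂ AA)) c ψ).symm

/-- Corollary 2.4(1): if h̄ ∈ Λ̂₀ satisfies ∂h̄/∂u = 0, then h̄ = α∫u₀dx + ∫h dx with
∂h/∂u₀ = 0. (Stated on representatives: h₀ represents h̄.) -/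
theorem stmt5 (h₀ : AH) (hmem : memAH 0 h₀) (hpd : pdH 0 h₀ ∈ NH) :
    ∃ (α : ℂ) (h : AH), memAH 0 h ∧ pdH 0 h = 0 ∧ h₀ - α • uH 0 - h ∈ NH := by
  obtain ⟨g, ψ, hgψ⟩ := exists_eq_dxH_add_map_of_mem_NH hpd
  have hdecomp (k : ℕ) := exists_decomposition_of_pd0_eq (G := PowerSeries.coeff k g)
    (c := PowerSeries.coeff k ψ)
    (homogA_iff_isWeightedHomogeneous.1 (by simpa using hmem k))
    (by simpa only [coeff_pdH, pdA, coeff_dxH, map_add, PowerSeries.coeff_map]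
      using congrArg (PowerSeries.coeff k) hgψ)
  choose H Q hH hH0 hHQ using hdecomp
  refine ⟨PowerSeries.coeff 0 ψ, PowerSeries.mk H, fun k => ?_, ?_, ?_⟩
  · simpa [homogA_iff_isWeightedHomogeneous] using hH k
  · ext k : 1; simp [coeff_pdH, pdA, hH0]
  · convert dxH_mem_NH (PowerSeries.mk Q) using 1
    ext k : 1
    rw [map_sub, map_sub, hHQ k, coeff_dxH, PowerSeries.coeff_mk, PowerSeries.coeff_mk]
    rcases k with _ | k
    · simp only [↓reduceIte, uH, LinearMap.map_smul_of_tower, PowerSeries.coeff_zero_C]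
      abel
    · simp [uH]

end RiemannPaper
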